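/- arXiv:1909.12545 — 6 statements merged into one kernel-verified Lean document; each statement's English description precedes it below -/
import Mathlib

section
/- Let g ≥ 2 and n ≥ 1 be integers with (n,g) ≠ (2,2), and let ν = (ℓ_1, ν_1; …; ℓ_k, ν_k) be a weighted partition of n different from (1,n) (i.e., it is not the case that k = 1 and ℓ_1 = 1). Then codim_g(ν) = 2(1 + n²(g−1)) − 2(k + (g−1)Σ_{i=1}^k ν_i²) ≥ 4. -/
/-- For `g ≥ 2`, `n ≥ 1`, `(n,g) ≠ (2,2)`, and a weighted partition
`ν = (ℓ_1,ν_1;…;ℓ_k,ν_k)` of `n` different from `(1,n)`, the codimension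
`codim_g(ν) = 2(1 + n²(g−1)) − 2(k + (g−1)Σ ν_i²)` is at least 4. -/
theorem stmt_1 (g n : ℕ) (hg : 2 ≤ g) (hn : 1 ≤ n) (hng : ¬(n = 2 ∧ g = 2))
    (k : ℕ) (hk : 0 < k) (ℓ ν : Fin k → ℕ)
    (hℓ : ∀ i, 0 < ℓ i) (hν : ∀ i, 0 < ν i)
    (hsort : ∀ i j : Fin k, i ≤ j → ν j ≤ ν i)
    (hsum : ∑ i, ℓ i * ν i = n)
    (hne : ¬(k = 1 ∧ ∀ i, ℓ i = 1)) :
    4 ≤ 2 * (1 + (n : ℤ) ^ 2 * ((g : ℤ) - 1))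
        - 2 * ((k : ℤ) + ((g : ℤ) - 1) * ∑ i, ((ν i : ℤ)) ^ 2) := by
  obtain ⟨g', rfl⟩ : ∃ g', g = g' + 1 := ⟨g - 1, by omega⟩
  have hg' : 1 ≤ g' := by omega
  set S : ℕ := ∑ i, (ν i) ^ 2 with hSdef
  have hcast : (∑ i, ((ν i : ℤ)) ^ 2) = (S : ℤ) := by
    rw [hSdef]; push_cast; rfl
  have hT : ∑ i, ν i ≤ n := by
    rw [← hsum]
    exact Finset.sum_le_sum fun i _ => Nat.le_mul_of_pos_left _ (hℓ i)
  clear_value S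
  have key : (k + 1 : ℕ) + g' * S ≤ g' * n ^ 2 := by
    by_cases hsp : n = 2 ∧ k = 2
    · obtain ⟨hn2, hk2⟩ := hsp
      subst hk2
      have hg2 : 2 ≤ g' := by omega
      have h0 := hν 0
      have h1 := hν 1
      rw [Fin.sum_univ_two] at hT
      have hS2 : S = 2 := by
        rw [hSdef, Fin.sum_univ_two]
        have e0 : ν 0 = 1 := by omega
        have e1 : ν 1 = 1 := by omega
        rw [e0, e1]; norm_num
      rw [hS2, hn2]
      nlinarith
    · have hmain : k + 1 + S ≤ n ^ 2 := by
        rcases Nat.lt_or_ge k 3 with hk3 | hk3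
        · interval_cases k
          · -- k = 1, so ℓ 0 ≥ 2
            push_neg at hne
            obtain ⟨i, hi⟩ := hne rfl
            have hi0 : i = 0 := Subsingleton.elim _ _
            subst hi0
            have hl2 : 2 ≤ ℓ 0 := by have := hℓ 0; omega
            rw [Fin.sum_univ_one] at hsum
            rw [hSdef, Fin.sum_univ_one]
            have h0 := hν 0
            have h2n : 2 * ν 0 ≤ n := by
              calc 2 * ν 0 ≤ ℓ 0 * ν 0 := Nat.mul_le_mul_right _ hl2
                _ = n := hsum
            nlinarith [h2n, h0]
          · -- k = 2
            have hn2 : n ≠ 2 := fun h => hsp ⟨h, rfl⟩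
            have h0 := hν 0
            have h1 := hν 1
            rw [Fin.sum_univ_two] at hT
            rw [hSdef, Fin.sum_univ_two]
            by_cases hp : 2 ≤ ν 0 * ν 1
            · nlinarith
            · have e0 : ν 0 = 1 := by nlinarith
              have e1 : ν 1 = 1 := by nlinarith
              have hn3 : 3 ≤ n := by omega
              nlinarith
        · -- k ≥ 3
          have hT2 : S + k * (k - 1) ≤ (∑ i, ν i) ^ 2 := by
            have h1 : ∀ i : Fin k, ν i ^ 2 + (k - 1) ≤ ∑ j, ν i * ν j := by
              intro i
              rw [← Finset.add_sum_erase _ _ (Finset.mem_univ i)]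
              have h2 : (k - 1) ≤ ∑ j ∈ Finset.univ.erase i, ν i * ν j := by
                calc (k - 1) = ∑ _j ∈ Finset.univ.erase i, 1 := by
                      rw [Finset.sum_const, smul_eq_mul, mul_one,
                        Finset.card_erase_of_mem (Finset.mem_univ i),
                        Finset.card_univ, Fintype.card_fin]
                  _ ≤ ∑ j ∈ Finset.univ.erase i, ν i * ν j :=
                      Finset.sum_le_sum fun j _ => Nat.mul_pos (hν i) (hν j)
              have : ν i ^ 2 = ν i * ν i := sq (ν i) ▸ rfl
              omega
            calc S + k * (k - 1) = ∑ i, (ν i ^ 2 + (k - 1)) := by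
                  rw [Finset.sum_add_distrib, Finset.sum_const, Finset.card_univ,
                    Fintype.card_fin, smul_eq_mul, hSdef]
              _ ≤ ∑ i, ∑ j, ν i * ν j := Finset.sum_le_sum fun i _ => h1 i
              _ = (∑ i, ν i) ^ 2 := by rw [sq, Finset.sum_mul_sum]
          have hTn : (∑ i, ν i) ^ 2 ≤ n ^ 2 := Nat.pow_le_pow_left hT 2
          have : k + 1 ≤ k * (k - 1) := by nlinarith [Nat.sub_add_cancel (by omega : 1 ≤ k)]
          omega
      calc (k + 1 : ℕ) + g' * S ≤ g' * (k + 1) + g' * S := by nlinarith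
        _ = g' * (k + 1 + S) := by ring
        _ ≤ g' * n ^ 2 := Nat.mul_le_mul_left g' hmain
  have key' := (Nat.cast_le (α := ℤ)).2 key
  rw [hcast]
  push_cast at key' ⊢
  linarith
end

section
/- Let g ≥ 2 and n ≥ 1 be integers with (n,g) ≠ (2,2), and let ν = (ℓ_1, ν_1; …; ℓ_k, ν_k) be a weighted partition of n different from (1,n). Then codim_g(ν) = 2(1 + n²(g−1)) − 2(k + (g−1)Σ_{i=1}^k ν_i²) ≥ 8, unless either (n,g) = (3,2) and ν = (1,2; 1,1), or (n,g) = (2,3) and ν = (1,1; 1,1). -/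
lemma aux_main (g n k S : ℕ) (hg : 2 ≤ g) (hSn : S ≤ n^2)
    (h : k + 3 ≤ (g-1)*(n^2 - S)) :
    8 ≤ 2 * (1 + (n : ℤ) ^ 2 * ((g : ℤ) - 1))
        - 2 * ((k : ℤ) + ((g : ℤ) - 1) * (S : ℤ)) := by
  have h1 : ((g-1 : ℕ) : ℤ) = (g : ℤ) - 1 := by omega
  have h2 : ((n^2 - S : ℕ) : ℤ) = (n : ℤ)^2 - S := by
    rw [Nat.cast_sub hSn]; push_cast; ring
  have h3 : ((k : ℤ) + 3) ≤ ((g : ℤ) - 1) * ((n : ℤ)^2 - S) := by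
    have hc := (Nat.cast_le (α := ℤ)).2 h
    rw [Nat.cast_mul, h1, h2] at hc
    push_cast at hc
    linarith
  nlinarith [h3]

set_option maxHeartbeats 1000000

/-- For `g ≥ 2`, `n ≥ 1`, `(n,g) ≠ (2,2)`, and a weighted partition
`ν = (ℓ_1,ν_1;…;ℓ_k,ν_k)` of `n` different from `(1,n)`, the codimension
`codim_g(ν)` is at least 8, unless `(n,g) = (3,2)` and `ν = (1,2;1,1)`, or
`(n,g) = (2,3)` and `ν = (1,1;1,1)`. -/
theorem stmt_2 (g n : ℕ) (hg : 2 ≤ g) (hn : 1 ≤ n) (hng : ¬(n = 2 ∧ g = 2))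
    (k : ℕ) (hk : 0 < k) (ℓ ν : Fin k → ℕ)
    (hℓ : ∀ i, 0 < ℓ i) (hν : ∀ i, 0 < ν i)
    (hsort : ∀ i j : Fin k, i ≤ j → ν j ≤ ν i)
    (hsum : ∑ i, ℓ i * ν i = n)
    (hne : ¬(k = 1 ∧ ∀ i, ℓ i = 1)) :
    8 ≤ 2 * (1 + (n : ℤ) ^ 2 * ((g : ℤ) - 1))
        - 2 * ((k : ℤ) + ((g : ℤ) - 1) * ∑ i, ((ν i : ℤ)) ^ 2)
    ∨ (n = 3 ∧ g = 2 ∧ k = 2 ∧ (∀ i, ℓ i = 1) ∧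
        Finset.univ.val.map ν = ({2, 1} : Multiset ℕ))
    ∨ (n = 2 ∧ g = 3 ∧ k = 2 ∧ (∀ i, ℓ i = 1) ∧
        Finset.univ.val.map ν = ({1, 1} : Multiset ℕ)) := by
  have hcast : ∑ i, ((ν i : ℤ)) ^ 2 = ((∑ i, (ν i)^2 : ℕ) : ℤ) := by push_cast; rfl
  rw [hcast]
  set S : ℕ := ∑ i, (ν i)^2 with hS
  set T : ℕ := ∑ i, ν i with hT
  have hTn : T ≤ n := by
    rw [← hsum, hT]
    exact Finset.sum_le_sum fun i _ => Nat.le_mul_of_pos_left _ (hℓ i)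
  obtain ⟨i0, hi0⟩ : ∃ i : Fin k, i.val = 0 := ⟨⟨0, hk⟩, rfl⟩
  have hSle : S ≤ ν i0 * T := by
    rw [hS, hT, Finset.mul_sum]
    refine Finset.sum_le_sum fun i _ => ?_
    have h := hsort i0 i (by rw [Fin.le_def, hi0]; exact Nat.zero_le _)
    calc ν i ^ 2 = ν i * ν i := sq (ν i)
    _ ≤ ν i0 * ν i := Nat.mul_le_mul_right _ h
  have hν0T : ν i0 + (k-1) ≤ T := by
    rw [hT, ← Finset.add_sum_erase Finset.univ ν (Finset.mem_univ i0)]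
    have h' := Finset.card_nsmul_le_sum (Finset.univ.erase i0) ν 1 (fun i _ => hν i)
    rw [smul_eq_mul, mul_one, Finset.card_erase_of_mem (Finset.mem_univ i0),
      Finset.card_univ, Fintype.card_fin] at h'
    exact Nat.add_le_add_left h' _
  have hkT : k ≤ T := by
    have h' := Finset.card_nsmul_le_sum (Finset.univ : Finset (Fin k)) ν 1 (fun i _ => hν i)
    rw [smul_eq_mul, mul_one, Finset.card_univ, Fintype.card_fin] at h'
    rw [hT]; exact h'
  have hSn : S ≤ n^2 := by
    calc S ≤ ν i0 * T := hSle
    _ ≤ T * T := Nat.mul_le_mul_right _ (by omega)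
    _ ≤ n * n := Nat.mul_le_mul hTn hTn
    _ = n^2 := (sq n).symm
  clear_value S T
  by_cases hk1 : k = 1
  · -- k = 1, so ℓ 0 ≥ 2
    subst hk1
    have hℓ2 : 2 ≤ ℓ 0 := by
      rcases Nat.lt_or_ge (ℓ 0) 2 with h | h
      · exfalso
        refine hne ⟨rfl, fun i => ?_⟩
        have hi : i = 0 := Subsingleton.elim _ _
        rw [hi]
        have := hℓ 0
        omega
      · exact h
    rw [Fin.sum_univ_one] at hsum
    have hS0 : S = ν 0 ^ 2 := by rw [hS, Fin.sum_univ_one]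
    have h2ν : 2 * ν 0 ≤ n := by
      rw [← hsum]; exact Nat.mul_le_mul_right _ hℓ2
    left
    apply aux_main g n 1 S hg hSn
    rcases Nat.lt_or_ge n 3 with h3 | h3
    · -- n = 2 forces ν 0 = 1, g ≥ 3
      have hν01 : ν 0 = 1 := by have := hν 0; omega
      have hn2 : n = 2 := by have := hν 0; omega
      have hg3 : 3 ≤ g := by
        rcases Nat.lt_or_ge g 3 with h | h
        · exact absurd ⟨hn2, by omega⟩ hng
        · exact h
      rw [hS0, hν01, hn2]
      calc (1:ℕ) + 3 = 2 * 2 := rfl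
      _ ≤ (g-1) * (2^2 - 1^2) := Nat.mul_le_mul (by omega) (by norm_num)
    · -- n ≥ 3 : 4*S ≤ n^2 gives 4 ≤ n^2 - S
      have h4S : 4 * S ≤ n^2 := by rw [hS0]; nlinarith
      have hn9 : 9 ≤ n^2 := by nlinarith
      calc (1:ℕ) + 3 = 4 := rfl
      _ ≤ n^2 - S := by omega
      _ ≤ (g-1) * (n^2 - S) := Nat.le_mul_of_pos_left _ (by omega)
  by_cases hk2 : k = 2
  · -- k = 2
    subst hk2
    rw [Fin.sum_univ_two] at hsum
    have hS0 : S = ν 0 ^ 2 + ν 1 ^ 2 := by rw [hS, Fin.sum_univ_two]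
    have hT0 : T = ν 0 + ν 1 := by rw [hT, Fin.sum_univ_two]
    have hd : ν 1 ≤ ν 0 := hsort 0 1 (by decide)
    have hb1 : 1 ≤ ν 0 := hν 0
    have hd1 : 1 ≤ ν 1 := hν 1
    have hbd : ν 0 + ν 1 ≤ n := by rw [← hT0]; exact hTn
    rcases Nat.lt_or_ge n 4 with h4 | h4
    · rcases Nat.lt_or_ge n 3 with h3 | h3
      · -- n = 2
        have hn2 : n = 2 := by omega
        have hν0v : ν 0 = 1 := by omega
        have hν1v : ν 1 = 1 := by omega
        have hℓ0v : ℓ 0 = 1 ∧ ℓ 1 = 1 := by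
          have h0 := hℓ 0; have h1 := hℓ 1
          rw [hν0v, hν1v, hn2] at hsum; omega
        have hg3 : 3 ≤ g := by
          rcases Nat.lt_or_ge g 3 with h | h
          · exact absurd ⟨hn2, by omega⟩ hng
          · exact h
        rcases Nat.lt_or_ge g 4 with hg4 | hg4
        · -- g = 3 : exception
          right; right
          refine ⟨hn2, by omega, rfl, fun i => ?_, ?_⟩
          · fin_cases i
            · exact hℓ0v.1
            · exact hℓ0v.2
          · have h' : Finset.univ.val.map ν = {ν 0, ν 1} := rfl
            rw [h', hν0v, hν1v]
        · left
          apply aux_main g n 2 S hg hSn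
          rw [hS0, hν0v, hν1v, hn2]
          calc (2:ℕ) + 3 ≤ 3 * (2^2 - (1^2+1^2)) := by norm_num
          _ ≤ (g-1) * (2^2 - (1^2+1^2)) := Nat.mul_le_mul_right _ (by omega)
      · -- n = 3
        have hn3 : n = 3 := by omega
        rcases Nat.lt_or_ge (ν 0) 2 with hb | hb
        · -- ν 0 = ν 1 = 1 : S = 2
          have hν0v : ν 0 = 1 := by omega
          have hν1v : ν 1 = 1 := by omega
          left
          apply aux_main g n 2 S hg hSn
          rw [hS0, hν0v, hν1v, hn3]
          calc (2:ℕ) + 3 ≤ 1 * (3^2 - (1^2+1^2)) := by norm_num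
          _ ≤ (g-1) * (3^2 - (1^2+1^2)) := Nat.mul_le_mul_right _ (by omega)
        · -- ν 0 = 2, ν 1 = 1, ℓ 0 = ℓ 1 = 1
          have hb2 : ν 0 = 2 := by
            rcases Nat.lt_or_ge (ν 0) 3 with h | h
            · omega
            · exfalso
              have h0 : ν 0 ≤ ℓ 0 * ν 0 := Nat.le_mul_of_pos_left _ (hℓ 0)
              have h1 : 1 ≤ ℓ 1 * ν 1 := Nat.mul_pos (hℓ 1) (hν 1)
              omega
          have hd2 : ν 1 = 1 := by omega
          have hℓ0v : ℓ 0 = 1 ∧ ℓ 1 = 1 := by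
            have h0 := hℓ 0; have h1 := hℓ 1
            rw [hb2, hd2, hn3] at hsum; omega
          rcases Nat.lt_or_ge g 3 with hg3 | hg3
          · -- g = 2 : exception
            right; left
            refine ⟨hn3, by omega, rfl, fun i => ?_, ?_⟩
            · fin_cases i
              · exact hℓ0v.1
              · exact hℓ0v.2
            · have h' : Finset.univ.val.map ν = {ν 0, ν 1} := rfl
              rw [h', hb2, hd2]
          · left
            apply aux_main g n 2 S hg hSn
            rw [hS0, hb2, hd2, hn3]
            calc (2:ℕ) + 3 ≤ 2 * (3^2 - (2^2+1^2)) := by norm_num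
            _ ≤ (g-1) * (3^2 - (2^2+1^2)) := Nat.mul_le_mul_right _ (by omega)
    · -- n ≥ 4 : n² - S ≥ 2n - 2 ≥ 6
      left
      apply aux_main g n 2 S hg hSn
      have key : S + 6 ≤ n^2 := by
        have hz : (ν 0 : ℤ)^2 + (ν 1 : ℤ)^2 + 6 ≤ (n:ℤ)^2 := by
          have c1 : (ν 0 : ℤ) + ν 1 ≤ n := by exact_mod_cast hbd
          have c2 : (1:ℤ) ≤ ν 1 := by exact_mod_cast hd1
          have c3 : (ν 1 : ℤ) ≤ ν 0 := by exact_mod_cast hd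
          have c4 : (4:ℤ) ≤ n := by exact_mod_cast h4
          nlinarith [mul_nonneg (sub_nonneg.2 c3) (sub_nonneg.2 c2),
            mul_nonneg (sub_nonneg.2 (le_trans (by linarith) c1 : (ν 0 : ℤ) + 1 ≤ n))
              (sub_nonneg.2 c2)]
        have : ((ν 0)^2 + (ν 1)^2 + 6 : ℕ) ≤ n^2 := by exact_mod_cast hz
        omega
      calc (2:ℕ) + 3 ≤ n^2 - S := by omega
      _ ≤ (g-1) * (n^2 - S) := Nat.le_mul_of_pos_left _ (by omega)
  · -- k ≥ 3
    have hk3 : 3 ≤ k := by omega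
    left
    apply aux_main g n k S hg hSn
    have hν01 : 1 ≤ ν i0 := hν i0
    have key : k + 3 + S ≤ n^2 := by
      have hz : (k:ℤ) + 3 + S ≤ (n:ℤ)^2 := by
        have c1 : (S:ℤ) ≤ (ν i0 : ℤ) * T := by exact_mod_cast hSle
        have c2 : (ν i0 : ℤ) + (k:ℤ) - 1 ≤ T := by
          have := hν0T; omega
        have c3 : (k:ℤ) ≤ T := by exact_mod_cast hkT
        have c4 : (T:ℤ) ≤ n := by exact_mod_cast hTn
        have c5 : (3:ℤ) ≤ k := by exact_mod_cast hk3
        have c6 : (1:ℤ) ≤ ν i0 := by exact_mod_cast hν01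
        have h1 : (k:ℤ) * ((k:ℤ) - 1) ≤ (T:ℤ) * ((T:ℤ) - ν i0) :=
          mul_le_mul c3 (by linarith) (by linarith) (by linarith)
        have h2 : (T:ℤ) * T ≤ (n:ℤ) * n :=
          mul_le_mul c4 c4 (by linarith) (by linarith)
        have h3 : (0:ℤ) ≤ ((k:ℤ) - 3) * ((k:ℤ) + 1) :=
          mul_nonneg (by linarith) (by linarith)
        nlinarith [h1, h2, h3, c1]
      exact_mod_cast hz
    calc k + 3 ≤ n^2 - S := by omega
    _ ≤ (g-1) * (n^2 - S) := Nat.le_mul_of_pos_left _ (by omega)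
end

section
/- Let ℓ ≥ 1 be an integer, ζ ∈ ℂ a primitive ℓ-th root of unity, c : Fin m → ZMod ℓ a function, and let D be the m×m diagonal complex matrix with diagonal entries D_{jj} = ζ^{c(j)} (the exponent taken via any lift of c(j) to ℤ, which is well defined since ζ^ℓ = 1). Suppose X is an invertible m×m complex matrix and k ∈ ZMod ℓ is such that D·X·D⁻¹ = ζ^k · X. Then for every i ∈ ZMod ℓ, the number of indices j ∈ Fin m with c(j) = i equals the number of indices j with c(j) = i + k. -/
/-- Let `ζ` be a primitive `ℓ`-th root of unity, `D` the diagonal matrix with entries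
`ζ^(c j)`, and `X` an invertible matrix with `D·X·D⁻¹ = ζ^k·X`. Then for every
`i : ZMod ℓ`, the number of indices `j` with `c j = i` equals the number with
`c j = i + k`. -/
theorem stmt_5 (ℓ : ℕ) (hℓ : 1 ≤ ℓ) (ζ : ℂ) (hζ : IsPrimitiveRoot ζ ℓ)
    (m : ℕ) (c : Fin m → ZMod ℓ)
    (X : Matrix (Fin m) (Fin m) ℂ) (hX : IsUnit X) (k : ZMod ℓ)
    (hcomm : (Matrix.diagonal fun j => ζ ^ (c j).val) * X *
        (Matrix.diagonal fun j => ζ ^ (c j).val)⁻¹ = ζ ^ k.val • X) :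
    ∀ i : ZMod ℓ, (Finset.univ.filter fun j => c j = i).card
      = (Finset.univ.filter fun j => c j = i + k).card := by
  haveI : NeZero ℓ := ⟨by omega⟩
  have hζ0 : ζ ≠ 0 := hζ.ne_zero (by omega)
  have hζℓ : ζ ^ ℓ = 1 := hζ.pow_eq_one
  set D : Matrix (Fin m) (Fin m) ℂ := Matrix.diagonal fun j => ζ ^ (c j).val with hD
  have hDdet : IsUnit D.det := by
    rw [hD, Matrix.det_diagonal]
    exact isUnit_iff_ne_zero.mpr
      (Finset.prod_ne_zero_iff.mpr fun j _ => pow_ne_zero _ hζ0)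
  have hXdet : IsUnit X.det := (Matrix.isUnit_iff_isUnit_det X).mp hX
  have hDX : D * X = ζ ^ k.val • (X * D) := by
    have h1 : D * X * D⁻¹ * D = D * X := by
      rw [Matrix.mul_assoc, Matrix.nonsing_inv_mul _ hDdet, Matrix.mul_one]
    rw [← h1, hcomm, Matrix.smul_mul]
  -- entrywise consequence
  have key : ∀ a b : Fin m, X a b ≠ 0 → c a = c b + k := by
    intro a b hab
    have h := congrFun (congrFun hDX a) b
    simp only [hD, Matrix.diagonal_mul, Matrix.mul_diagonal, Matrix.smul_apply,
      smul_eq_mul] at h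
    have hpow : ζ ^ (c a).val = ζ ^ ((c b).val + k.val) := by
      have h2 : ζ ^ (c a).val * X a b = ζ ^ ((c b).val + k.val) * X a b := by
        rw [pow_add]; linear_combination h
      exact mul_right_cancel₀ hab h2
    have hmodn : (c a).val % ℓ = ((c b).val + k.val) % ℓ := by
      apply hζ.pow_inj (Nat.mod_lt _ (by omega)) (Nat.mod_lt _ (by omega))
      rw [← pow_eq_pow_mod _ hζℓ, ← pow_eq_pow_mod _ hζℓ, hpow]
    have hmod : ((c a).val : ZMod ℓ) = (((c b).val + k.val : ℕ) : ZMod ℓ) :=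
      (ZMod.natCast_eq_natCast_iff _ _ _).mpr hmodn
    push_cast at hmod
    simpa [ZMod.natCast_val, ZMod.cast_id] using hmod
  -- mulVec is injective
  have hXinj : Function.Injective X.mulVec := by
    intro u v h
    have h2 := congrArg (X⁻¹.mulVec) h
    rwa [Matrix.mulVec_mulVec, Matrix.mulVec_mulVec, Matrix.nonsing_inv_mul _ hXdet,
      Matrix.one_mulVec, Matrix.one_mulVec] at h2
  -- the key inequality
  have hle : ∀ i : ZMod ℓ, (Finset.univ.filter fun j => c j = i).card
      ≤ (Finset.univ.filter fun j => c j = i + k).card := by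
    intro i
    rw [← Fintype.card_subtype, ← Fintype.card_subtype]
    let φ : ({b : Fin m // c b = i} → ℂ) →ₗ[ℂ] ({a : Fin m // c a = i + k} → ℂ) :=
      { toFun := fun v a => ∑ b : {b : Fin m // c b = i}, X a.1 b.1 * v b
        map_add' := by
          intro v w; funext a
          simp [mul_add, Finset.sum_add_distrib]
        map_smul' := by
          intro r v; funext a
          simp [Finset.mul_sum, mul_left_comm] }
    have hinj : Function.Injective φ := by
      rw [injective_iff_map_eq_zero]
      intro v hv
      set w : Fin m → ℂ := fun j => if h : c j = i then v ⟨j, h⟩ else 0 with hw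
      have hsum : ∀ a : Fin m, X.mulVec w a
          = ∑ b : {b : Fin m // c b = i}, X a b.1 * v b := by
        intro a
        rw [Matrix.mulVec, dotProduct]
        rw [← Finset.sum_filter_of_ne (p := fun j => c j = i)
          (fun x _ hx => by
            by_contra hcx
            exact hx (by simp [hw, hcx]))]
        rw [Finset.sum_subtype (p := fun j => c j = i) _ (fun x => by simp) (fun j => X a j * w j)]
        exact Finset.sum_congr rfl fun b _ => by simp [hw, b.2]
      have hw0 : X.mulVec w = 0 := by
        funext a
        by_cases ha : c a = i + k
        · rw [hsum a]
          exact congrFun hv ⟨a, ha⟩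
        · rw [hsum a]
          apply Finset.sum_eq_zero
          intro b _
          have hXab : X a b.1 = 0 := by
            by_contra hne
            exact ha (by rw [key a b.1 hne, b.2])
          rw [hXab, zero_mul]
      have : w = 0 := hXinj (by rw [hw0, Matrix.mulVec_zero])
      funext b
      have hb := congrFun this b.1
      simpa [hw, b.2] using hb
    have := LinearMap.finrank_le_finrank_of_injective hinj
    simpa [Module.finrank_fintype_fun_eq_card] using this
  -- conclude equality from inequality and equal sums
  have hsum : ∑ i : ZMod ℓ, (Finset.univ.filter fun j => c j = i).card
      = ∑ i : ZMod ℓ, (Finset.univ.filter fun j => c j = i + k).card := by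
    exact (Equiv.sum_comp (Equiv.addRight k)
      (fun i => (Finset.univ.filter fun j => c j = i).card)).symm
  intro i
  exact (Finset.sum_eq_sum_iff_of_le (fun i _ => hle i)).mp hsum i (Finset.mem_univ i)
end

section
/- Let R be a unital associative (not necessarily commutative) ring. (a) The map (A, A*) ↦ (A, A⁻¹ + A*) is a bijection from the set {(A, A*) ∈ R × R : A, 1 + A·A*, and 1 + A*·A are all units of R} onto R^× × R^×, with inverse (A, B) ↦ (A, B − A⁻¹). (b) If (A, A*) corresponds to (A, B) under this bijection, then 1 + A·A* = A·B, 1 + A*·A = B·A, and (1 + A·A*)·(1 + A*·A)⁻¹ = A·B·A⁻¹·B⁻¹. (c) Consequently, for any g-tuples (A_i, A_i*) corresponding to (A_i, B_i) (1 ≤ i ≤ g), the ordered product ∏_{i=1}^g (1 + A_i A_i*)(1 + A_i* A_i)⁻¹ equals the ordered product of commutators ∏_{i=1}^g A_i B_i A_i⁻¹ B_i⁻¹; in particular the first product equals 1 if and only if the second does. -/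
private lemma inv_rev {R : Type*} [Ring R] {a b : R} (ha : IsUnit a) (hb : IsUnit b) :
    Ring.inverse (a * b) = Ring.inverse b * Ring.inverse a := by
  obtain ⟨u, rfl⟩ := ha; obtain ⟨v, rfl⟩ := hb
  rw [← Units.val_mul, Ring.inverse_unit, Ring.inverse_unit, Ring.inverse_unit,
    mul_inv_rev, Units.val_mul]

private lemma fact1 {R : Type*} [Ring R] {a : R} (b : R) (ha : IsUnit a) :
    1 + a * b = a * (Ring.inverse a + b) := by
  rw [mul_add, Ring.mul_inverse_cancel a ha]

private lemma fact2 {R : Type*} [Ring R] {a : R} (b : R) (ha : IsUnit a) :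
    1 + b * a = (Ring.inverse a + b) * a := by
  rw [add_mul, Ring.inverse_mul_cancel a ha]

private lemma Bunit {R : Type*} [Ring R] {a b : R} (ha : IsUnit a)
    (h1 : IsUnit (1 + a * b)) : IsUnit (Ring.inverse a + b) := by
  have h : Ring.inverse a * (1 + a * b) = Ring.inverse a + b := by
    rw [fact1 b ha, ← mul_assoc, Ring.inverse_mul_cancel a ha, one_mul]
  rw [← h]
  exact (isUnit_ringInverse.mpr ha).mul h1

/-- (a) In any unital ring `R`, the map `(A, A*) ↦ (A, A⁻¹ + A*)` is a bijection from
`{(A,A*) : A, 1 + A·A*, 1 + A*·A units}` onto pairs of units, with inverse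
`(A, B) ↦ (A, B − A⁻¹)`. (b) Under this correspondence `1 + A·A* = A·B`,
`1 + A*·A = B·A` and `(1 + A·A*)(1 + A*·A)⁻¹ = A·B·A⁻¹·B⁻¹`. (c) Hence for
`g`-tuples the ordered product `∏ (1 + A_i A_i*)(1 + A_i* A_i)⁻¹` equals the
ordered product of commutators `∏ A_i B_i A_i⁻¹ B_i⁻¹`; in particular one equals
`1` iff the other does. (Inverses are taken via `Ring.inverse`.) -/
theorem stmt_9 (R : Type*) [Ring R] (g : ℕ) (A Astar : Fin g → R)
    (hA : ∀ i, IsUnit (A i))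
    (h1 : ∀ i, IsUnit (1 + A i * Astar i))
    (h2 : ∀ i, IsUnit (1 + Astar i * A i)) :
    -- (a) bijection
    (Set.BijOn (fun p : R × R => (p.1, Ring.inverse p.1 + p.2))
      {p : R × R | IsUnit p.1 ∧ IsUnit (1 + p.1 * p.2) ∧ IsUnit (1 + p.2 * p.1)}
      {p : R × R | IsUnit p.1 ∧ IsUnit p.2}) ∧
    -- (a) with the stated two-sided inverse
    (Set.InvOn (fun p : R × R => (p.1, p.2 - Ring.inverse p.1))
      (fun p : R × R => (p.1, Ring.inverse p.1 + p.2))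
      {p : R × R | IsUnit p.1 ∧ IsUnit (1 + p.1 * p.2) ∧ IsUnit (1 + p.2 * p.1)}
      {p : R × R | IsUnit p.1 ∧ IsUnit p.2}) ∧
    -- (b)
    (∀ i, 1 + A i * Astar i = A i * (Ring.inverse (A i) + Astar i)) ∧
    (∀ i, 1 + Astar i * A i = (Ring.inverse (A i) + Astar i) * A i) ∧
    (∀ i, (1 + A i * Astar i) * Ring.inverse (1 + Astar i * A i)
        = A i * (Ring.inverse (A i) + Astar i) * Ring.inverse (A i) *
            Ring.inverse (Ring.inverse (A i) + Astar i)) ∧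
    -- (c)
    (((List.finRange g).map fun i =>
        (1 + A i * Astar i) * Ring.inverse (1 + Astar i * A i)).prod
      = ((List.finRange g).map fun i =>
          A i * (Ring.inverse (A i) + Astar i) * Ring.inverse (A i) *
            Ring.inverse (Ring.inverse (A i) + Astar i)).prod) ∧
    ((((List.finRange g).map fun i =>
        (1 + A i * Astar i) * Ring.inverse (1 + Astar i * A i)).prod = 1)
      ↔ (((List.finRange g).map fun i =>
          A i * (Ring.inverse (A i) + Astar i) * Ring.inverse (A i) *
            Ring.inverse (Ring.inverse (A i) + Astar i)).prod = 1)) := by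
  -- forward maps-to
  have mt1 : Set.MapsTo (fun p : R × R => (p.1, Ring.inverse p.1 + p.2))
      {p : R × R | IsUnit p.1 ∧ IsUnit (1 + p.1 * p.2) ∧ IsUnit (1 + p.2 * p.1)}
      {p : R × R | IsUnit p.1 ∧ IsUnit p.2} := by
    rintro ⟨a, b⟩ ⟨ha, hab, -⟩
    exact ⟨ha, Bunit ha hab⟩
  have mt2 : Set.MapsTo (fun p : R × R => (p.1, p.2 - Ring.inverse p.1))
      {p : R × R | IsUnit p.1 ∧ IsUnit p.2}
      {p : R × R | IsUnit p.1 ∧ IsUnit (1 + p.1 * p.2) ∧ IsUnit (1 + p.2 * p.1)} := by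
    rintro ⟨a, b⟩ ⟨ha, hb⟩
    refine ⟨ha, ?_, ?_⟩
    · have : 1 + a * (b - Ring.inverse a) = a * b := by
        rw [mul_sub, Ring.mul_inverse_cancel a ha]; abel
      rw [this]; exact ha.mul hb
    · have : 1 + (b - Ring.inverse a) * a = b * a := by
        rw [sub_mul, Ring.inverse_mul_cancel a ha]; abel
      rw [this]; exact hb.mul ha
  have hInv : Set.InvOn (fun p : R × R => (p.1, p.2 - Ring.inverse p.1))
      (fun p : R × R => (p.1, Ring.inverse p.1 + p.2))
      {p : R × R | IsUnit p.1 ∧ IsUnit (1 + p.1 * p.2) ∧ IsUnit (1 + p.2 * p.1)}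
      {p : R × R | IsUnit p.1 ∧ IsUnit p.2} := by
    constructor
    · rintro ⟨a, b⟩ -; simp
    · rintro ⟨a, b⟩ -; simp
  -- (b)
  have b1 : ∀ i, 1 + A i * Astar i = A i * (Ring.inverse (A i) + Astar i) :=
    fun i => fact1 _ (hA i)
  have b2 : ∀ i, 1 + Astar i * A i = (Ring.inverse (A i) + Astar i) * A i :=
    fun i => fact2 _ (hA i)
  have hB : ∀ i, IsUnit (Ring.inverse (A i) + Astar i) := fun i => Bunit (hA i) (h1 i)
  have b3 : ∀ i, (1 + A i * Astar i) * Ring.inverse (1 + Astar i * A i)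
      = A i * (Ring.inverse (A i) + Astar i) * Ring.inverse (A i) *
          Ring.inverse (Ring.inverse (A i) + Astar i) := by
    intro i
    rw [b1 i, b2 i, inv_rev (hB i) (hA i), ← mul_assoc]
  -- (c)
  have c1 : (((List.finRange g).map fun i =>
        (1 + A i * Astar i) * Ring.inverse (1 + Astar i * A i)).prod
      = ((List.finRange g).map fun i =>
          A i * (Ring.inverse (A i) + Astar i) * Ring.inverse (A i) *
            Ring.inverse (Ring.inverse (A i) + Astar i)).prod) := by
    congr 1
    exact List.map_congr_left fun i _ => b3 i
  exact ⟨hInv.bijOn mt1 mt2, hInv, b1, b2, b3, c1, by rw [c1]⟩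
end

section
/- Let k be a field, A an associative unital k-algebra, and M an A-module with an A-submodule S such that both S and T := M/S are simple A-modules, S is not isomorphic to T, and the extension is non-split (there is no A-submodule N ⊆ M with N ⊕ S = M internally). Assume moreover that every A-module endomorphism of S and every A-module endomorphism of T is multiplication by a scalar in k. Then every A-module endomorphism of M is multiplication by a scalar in k (i.e., M is a brick). -/
/-- Scalar multiplication by a central element `algebraMap k A c` as an `A`-linear map. -/
private def scalMap (k : Type*) [CommSemiring k] (A : Type*) [Ring A] [Algebra k A]
    (M : Type*) [AddCommGroup M] [Module A M] (c : k) : M →ₗ[A] M where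
  toFun x := algebraMap k A c • x
  map_add' x y := smul_add _ x y
  map_smul' a x := by
    simp only [RingHom.id_apply]
    show (algebraMap k A) c • (a • x) = a • ((algebraMap k A) c • x)
    rw [smul_smul, smul_smul, Algebra.commutes]

/-- A non-split extension of two non-isomorphic simple modules, each of which has
only scalar endomorphisms, itself has only scalar endomorphisms (is a brick).
"Multiplication by a scalar `c : k`" means the action of `algebraMap k A c`. -/
theorem stmt_11 (k : Type*) [Field k] (A : Type*) [Ring A] [Algebra k A]
    (M : Type*) [AddCommGroup M] [Module A M] (S : Submodule A M)
    (hS : IsSimpleModule A S) (hT : IsSimpleModule A (M ⧸ S))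
    (hiso : IsEmpty (S ≃ₗ[A] (M ⧸ S)))
    (hnonsplit : ¬ ∃ N : Submodule A M, IsCompl N S)
    (hSchurS : ∀ f : S →ₗ[A] S, ∃ c : k, ∀ x, f x = algebraMap k A c • x)
    (hSchurT : ∀ f : (M ⧸ S) →ₗ[A] (M ⧸ S), ∃ c : k, ∀ x, f x = algebraMap k A c • x) :
    ∀ f : M →ₗ[A] M, ∃ c : k, ∀ x, f x = algebraMap k A c • x := by
  intro f
  -- Step 1: the composition S → M → M → M/S is zero, so f maps S into S.
  set g : S →ₗ[A] (M ⧸ S) := S.mkQ ∘ₗ f ∘ₗ S.subtype with hg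
  have hg0 : g = 0 := by
    by_contra hne
    have hinj : Function.Injective g := (g.injective_or_eq_zero).resolve_right hne
    have hsurj : Function.Surjective g := (g.surjective_or_eq_zero).resolve_right hne
    exact hiso.elim (LinearEquiv.ofBijective g ⟨hinj, hsurj⟩)
  have hfS : ∀ x ∈ S, f x ∈ S := by
    intro x hx
    have : g ⟨x, hx⟩ = 0 := by rw [hg0]; rfl
    simpa [hg, Submodule.Quotient.mk_eq_zero] using this
  -- restriction to S and induced map on M/S
  obtain ⟨c, hc⟩ := hSchurS (f.restrict hfS)
  have hfS' : ∀ x ∈ S, f x = algebraMap k A c • x := by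
    intro x hx
    have := congrArg (Subtype.val) (hc ⟨x, hx⟩)
    simpa using this
  have hcomap : S ≤ S.comap f := fun x hx => hfS x hx
  obtain ⟨d, hd⟩ := hSchurT (S.mapQ S f hcomap)
  have hd' : ∀ m : M, S.mkQ (f m) = algebraMap k A d • S.mkQ m := by
    intro m
    have := hd (S.mkQ m)
    simpa [Submodule.mapQ_apply] using this
  -- h := f - c • id
  set h : M →ₗ[A] M := f - scalMap k A M c with hh
  have hker : ∀ x ∈ S, h x = 0 := by
    intro x hx
    simp [hh, scalMap, LinearMap.sub_apply, hfS' x hx]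
  have hSle : S ≤ LinearMap.ker h := fun x hx => by simpa using hker x hx
  have hbar : ∀ m : M, S.mkQ (h m) = algebraMap k A (d - c) • S.mkQ m := by
    intro m
    have h1 : S.mkQ (h m) = S.mkQ (f m) - S.mkQ (algebraMap k A c • m) := by
      simp [hh, scalMap]
    rw [h1, hd' m, map_sub, sub_smul]
    congr 1
  by_cases hdc : d = c
  · -- h maps M into S and kills S, giving a map M/S → S which must be zero.
    have hmem : ∀ m : M, h m ∈ S := by
      intro m
      have := hbar m
      rw [hdc, sub_self, map_zero, zero_smul] at this
      simpa [Submodule.Quotient.mk_eq_zero] using this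
    set φ : (M ⧸ S) →ₗ[A] S := S.liftQ (h.codRestrict S hmem)
      (fun x hx => by
        rw [LinearMap.mem_ker]
        exact Subtype.ext (by simp [LinearMap.codRestrict_apply, hker x hx])) with hφ
    have hφ0 : φ = 0 := by
      by_contra hne
      have hinj : Function.Injective φ := (φ.injective_or_eq_zero).resolve_right hne
      have hsurj : Function.Surjective φ := (φ.surjective_or_eq_zero).resolve_right hne
      exact hiso.elim (LinearEquiv.ofBijective φ ⟨hinj, hsurj⟩).symm
    refine ⟨c, fun m => ?_⟩
    have : φ (S.mkQ m) = 0 := by rw [hφ0]; rfl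
    have hm0 : h m = 0 := by
      have := congrArg (Subtype.val) this
      simpa [hφ, Submodule.mkQ_apply, Submodule.liftQ_apply] using this
    have := sub_eq_zero.mp (by simpa [hh, LinearMap.sub_apply, scalMap] using hm0)
    simpa [scalMap] using this
  · -- d ≠ c : construct a splitting, contradiction.
    exfalso
    set a : A := algebraMap k A (d - c) with ha
    set b : A := algebraMap k A (d - c)⁻¹ with hb
    have hdc' : d - c ≠ 0 := sub_ne_zero.mpr hdc
    have hab : a * b = 1 := by
      rw [ha, hb, ← map_mul, mul_inv_cancel₀ hdc', map_one]
    have hba : b * a = 1 := by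
      rw [ha, hb, ← map_mul, inv_mul_cancel₀ hdc', map_one]
    set h' : (M ⧸ S) →ₗ[A] M := S.liftQ h hSle with hh'
    have hπh' : ∀ t : M ⧸ S, S.mkQ (h' t) = a • t := by
      intro t
      obtain ⟨m, rfl⟩ := S.mkQ_surjective t
      simpa [hh', Submodule.mkQ_apply, Submodule.liftQ_apply] using hbar m
    set N : Submodule A M := LinearMap.range h' with hN
    apply hnonsplit
    refine ⟨N, ?_, ?_⟩
    · -- disjoint
      rw [disjoint_iff, Submodule.eq_bot_iff]
      rintro x ⟨hxN, hxS⟩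
      obtain ⟨t, rfl⟩ := hxN
      have h1 : a • t = 0 := by
        rw [← hπh']
        simpa [Submodule.Quotient.mk_eq_zero] using hxS
      have ht : t = 0 := by
        have : b • a • t = 0 := by rw [h1, smul_zero]
        rwa [smul_smul, hba, one_smul] at this
      rw [ht, map_zero]
    · -- codisjoint
      rw [codisjoint_iff, Submodule.eq_top_iff']
      intro m
      set t : M ⧸ S := b • S.mkQ m with ht
      have h1 : S.mkQ (h' t) = S.mkQ m := by
        rw [hπh', ht, smul_smul, hab, one_smul]
      have h2 : m - h' t ∈ S := by
        rw [← Submodule.Quotient.mk_eq_zero]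
        have : S.mkQ (m - h' t) = 0 := by rw [map_sub, h1, sub_self]
        simpa using this
      have h3 : h' t ∈ N := ⟨t, rfl⟩
      have := Submodule.add_mem_sup h3 h2
      simpa using this
end

section
/- Let n ≥ 1 and let d, e, d', e' : Fin n → ℂ^×. There exists an invertible n×n complex matrix P such that P·diag(d)·P⁻¹ = diag(d') and P·diag(e)·P⁻¹ = diag(e') if and only if the multiset {(d(i), e(i)) : i ∈ Fin n} equals the multiset {(d'(i), e'(i)) : i ∈ Fin n}. -/
open Finset

/-- Map of `univ.val` over `Fin (n+1)` splits off the value at `0`. -/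
private lemma map_univ_val_succ {α : Type*} {n : ℕ} (f : Fin (n + 1) → α) :
    Multiset.map f (univ : Finset (Fin (n + 1))).val
      = f 0 ::ₘ Multiset.map (fun i => f i.succ) (univ : Finset (Fin n)).val := by
  rw [Fin.univ_succ]
  simp only [Finset.cons_val, Multiset.map_cons, Finset.map_val, Multiset.map_map]
  rfl

/-- If two tuples have the same multiset of values, there is a permutation
relating them. -/
private lemma exists_perm_of_map_eq {α : Type*} : ∀ {n : ℕ} (f g : Fin n → α),
    Multiset.map f (univ : Finset (Fin n)).val = Multiset.map g (univ : Finset (Fin n)).val →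
    ∃ σ : Equiv.Perm (Fin n), ∀ i, f (σ i) = g i := by
  intro n
  induction n with
  | zero => intro f g _; exact ⟨Equiv.refl _, fun i => i.elim0⟩
  | succ n ih =>
    intro f g h
    have hg0 : g 0 ∈ Multiset.map f (univ : Finset (Fin (n + 1))).val := by
      rw [h]; exact Multiset.mem_map_of_mem _ (Finset.mem_univ_val _)
    obtain ⟨j, -, hj⟩ := Multiset.mem_map.mp hg0
    set f' : Fin (n + 1) → α := f ∘ Equiv.swap 0 j with hf'
    have hmapf' : Multiset.map f' (univ : Finset (Fin (n + 1))).val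
        = Multiset.map f (univ : Finset (Fin (n + 1))).val := by
      conv_rhs => rw [← Multiset.map_univ_val_equiv (Equiv.swap 0 j)]
      rw [Multiset.map_map]
    have hsplit := hmapf'.trans h
    rw [map_univ_val_succ f', map_univ_val_succ g] at hsplit
    have hf'0 : f' 0 = g 0 := by simp [hf', hj]
    rw [hf'0] at hsplit
    have htail := (Multiset.cons_inj_right _).mp hsplit
    obtain ⟨e, he⟩ := ih (fun i => f' i.succ) (fun i => g i.succ) htail
    refine ⟨Equiv.trans (Equiv.Perm.decomposeFin.symm (0, e)) (Equiv.swap 0 j), fun i => ?_⟩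
    refine Fin.cases ?_ (fun i => ?_) i
    · simpa [hf'] using hf'0
    · have : Equiv.Perm.decomposeFin.symm (0, e) i.succ = (e i).succ := by
        simp
      simpa [this, hf'] using he i

/-- Key counting lemma: if `Q` has injective `mulVec` and `Q i j ≠ 0 → f j = g i`,
then each fiber of `f` is at most as large as the corresponding fiber of `g`. -/
private lemma fiber_card_le {α : Type*} [DecidableEq α] {n : ℕ}
    (Q : Matrix (Fin n) (Fin n) ℂ) (hQ : Function.Injective Q.mulVec)
    (f g : Fin n → α) (hfg : ∀ i j, Q i j ≠ 0 → f j = g i) (v : α) :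
    (univ.filter fun j => f j = v).card ≤ (univ.filter fun i => g i = v).card := by
  classical
  set A : Finset (Fin n) := univ.filter fun j => f j = v with hA
  set B : Finset (Fin n) := univ.filter fun i => g i = v with hB
  -- extension by zero
  let ext : (↥A → ℂ) → (Fin n → ℂ) := fun x j => if h : j ∈ A then x ⟨j, h⟩ else 0
  have ext_add : ∀ x y, ext (x + y) = ext x + ext y := by
    intro x y; funext j; by_cases h : j ∈ A <;> simp [ext, h]
  have ext_smul : ∀ (c : ℂ) x, ext (c • x) = c • ext x := by
    intro c x; funext j; by_cases h : j ∈ A <;> simp [ext, h]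
  -- mulVec of an extension vanishes outside B
  have hout : ∀ (x : ↥A → ℂ) (i : Fin n), i ∉ B → Q.mulVec (ext x) i = 0 := by
    intro x i hi
    unfold Matrix.mulVec dotProduct
    apply Finset.sum_eq_zero
    intro j _
    rcases eq_or_ne (Q i j) 0 with h0 | h0
    · simp [h0]
    · have hj : j ∉ A := by
        intro hjA
        have : f j = v := (Finset.mem_filter.mp hjA).2
        exact hi (Finset.mem_filter.mpr ⟨Finset.mem_univ _, (hfg i j h0).symm.trans this⟩)
      simp [ext, hj]
  let L : (↥A → ℂ) →ₗ[ℂ] (↥B → ℂ) :=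
    { toFun := fun x i => Q.mulVec (ext x) i.val
      map_add' := by intro x y; funext i; simp [ext_add, Matrix.mulVec_add]
      map_smul' := by intro c x; funext i; simp [ext_smul, Matrix.mulVec_smul] }
  have hLinj : Function.Injective L := by
    intro x y hxy
    have hmv : Q.mulVec (ext x) = Q.mulVec (ext y) := by
      funext i
      by_cases hi : i ∈ B
      · exact congrFun hxy ⟨i, hi⟩
      · rw [hout x i hi, hout y i hi]
    have hext : ext x = ext y := hQ hmv
    funext j
    have := congrFun hext j.val
    simpa [ext, j.prop] using this
  have hrank := LinearMap.finrank_le_finrank_of_injective hLinj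
  simpa [Module.finrank_fintype_fun_eq_card] using hrank

/-- Count of a value in the multiset of values of a tuple. -/
private lemma count_map_univ {α : Type*} [DecidableEq α] {n : ℕ} (f : Fin n → α) (v : α) :
    Multiset.count v (Multiset.map f (univ : Finset (Fin n)).val)
      = (univ.filter fun i => f i = v).card := by
  rw [Multiset.count_map]
  rw [Finset.card_def, Finset.filter_val]
  congr 1
  exact Multiset.filter_congr (fun a _ => eq_comm)

/-- Two pairs of diagonal invertible matrices are simultaneously conjugate if and
only if the multisets of joint diagonal entries (pairs counted with multiplicity)
coincide. -/
theorem stmt_15 (n : ℕ) (hn : 1 ≤ n) (d e d' e' : Fin n → ℂˣ) :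
    (∃ P : Matrix (Fin n) (Fin n) ℂ, IsUnit P ∧
      P * Matrix.diagonal (fun i => (d i : ℂ)) * P⁻¹
        = Matrix.diagonal (fun i => (d' i : ℂ)) ∧
      P * Matrix.diagonal (fun i => (e i : ℂ)) * P⁻¹
        = Matrix.diagonal (fun i => (e' i : ℂ)))
    ↔ Multiset.map (fun i => (d i, e i)) Finset.univ.val
        = Multiset.map (fun i => (d' i, e' i)) Finset.univ.val := by
  classical
  constructor
  · rintro ⟨P, hP, hPd, hPe⟩
    have hdet : IsUnit P.det := (Matrix.isUnit_iff_isUnit_det P).mp hP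
    have hPinv : P⁻¹ * P = 1 := Matrix.nonsing_inv_mul P hdet
    have hinvP : P * P⁻¹ = 1 := Matrix.mul_nonsing_inv P hdet
    -- intertwining relations
    have hPd' : P * Matrix.diagonal (fun i => (d i : ℂ))
        = Matrix.diagonal (fun i => (d' i : ℂ)) * P := by
      calc P * Matrix.diagonal (fun i => (d i : ℂ))
          = P * Matrix.diagonal (fun i => (d i : ℂ)) * (P⁻¹ * P) := by rw [hPinv, mul_one]
        _ = (P * Matrix.diagonal (fun i => (d i : ℂ)) * P⁻¹) * P := by rw [← mul_assoc]
        _ = Matrix.diagonal (fun i => (d' i : ℂ)) * P := by rw [hPd]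
    have hPe' : P * Matrix.diagonal (fun i => (e i : ℂ))
        = Matrix.diagonal (fun i => (e' i : ℂ)) * P := by
      calc P * Matrix.diagonal (fun i => (e i : ℂ))
          = P * Matrix.diagonal (fun i => (e i : ℂ)) * (P⁻¹ * P) := by rw [hPinv, mul_one]
        _ = (P * Matrix.diagonal (fun i => (e i : ℂ)) * P⁻¹) * P := by rw [← mul_assoc]
        _ = Matrix.diagonal (fun i => (e' i : ℂ)) * P := by rw [hPe]
    have hPrel : ∀ i j, P i j ≠ 0 →
        ((d j : ℂˣ), (e j : ℂˣ)) = (d' i, e' i) := by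
      intro i j hij
      have h1 : P i j * (d j : ℂ) = (d' i : ℂ) * P i j := by
        have := congrFun (congrFun hPd' i) j
        simpa [Matrix.mul_diagonal, Matrix.diagonal_mul] using this
      have h2 : P i j * (e j : ℂ) = (e' i : ℂ) * P i j := by
        have := congrFun (congrFun hPe' i) j
        simpa [Matrix.mul_diagonal, Matrix.diagonal_mul] using this
      have hd : (d j : ℂ) = (d' i : ℂ) :=
        mul_left_cancel₀ hij (h1.trans (mul_comm _ _))
      have he : (e j : ℂ) = (e' i : ℂ) :=
        mul_left_cancel₀ hij (h2.trans (mul_comm _ _))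
      exact Prod.ext (Units.ext hd) (Units.ext he)
    -- relations for the inverse
    have hQd : Matrix.diagonal (fun i => (d i : ℂ)) * P⁻¹
        = P⁻¹ * Matrix.diagonal (fun i => (d' i : ℂ)) := by
      calc Matrix.diagonal (fun i => (d i : ℂ)) * P⁻¹
          = P⁻¹ * (P * Matrix.diagonal (fun i => (d i : ℂ))) * P⁻¹ := by
            rw [← mul_assoc, hPinv, one_mul]
        _ = P⁻¹ * (Matrix.diagonal (fun i => (d' i : ℂ)) * P) * P⁻¹ := by rw [hPd']
        _ = P⁻¹ * Matrix.diagonal (fun i => (d' i : ℂ)) * (P * P⁻¹) := by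
            rw [← mul_assoc, mul_assoc]
        _ = P⁻¹ * Matrix.diagonal (fun i => (d' i : ℂ)) := by rw [hinvP, mul_one]
    have hQe : Matrix.diagonal (fun i => (e i : ℂ)) * P⁻¹
        = P⁻¹ * Matrix.diagonal (fun i => (e' i : ℂ)) := by
      calc Matrix.diagonal (fun i => (e i : ℂ)) * P⁻¹
          = P⁻¹ * (P * Matrix.diagonal (fun i => (e i : ℂ))) * P⁻¹ := by
            rw [← mul_assoc, hPinv, one_mul]
        _ = P⁻¹ * (Matrix.diagonal (fun i => (e' i : ℂ)) * P) * P⁻¹ := by rw [hPe']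
        _ = P⁻¹ * Matrix.diagonal (fun i => (e' i : ℂ)) * (P * P⁻¹) := by
            rw [← mul_assoc, mul_assoc]
        _ = P⁻¹ * Matrix.diagonal (fun i => (e' i : ℂ)) := by rw [hinvP, mul_one]
    have hQrel : ∀ i j, P⁻¹ i j ≠ 0 →
        ((d' j : ℂˣ), (e' j : ℂˣ)) = (d i, e i) := by
      intro i j hij
      have h1 : (d i : ℂ) * P⁻¹ i j = P⁻¹ i j * (d' j : ℂ) := by
        have := congrFun (congrFun hQd i) j
        simpa [Matrix.mul_diagonal, Matrix.diagonal_mul] using this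
      have h2 : (e i : ℂ) * P⁻¹ i j = P⁻¹ i j * (e' j : ℂ) := by
        have := congrFun (congrFun hQe i) j
        simpa [Matrix.mul_diagonal, Matrix.diagonal_mul] using this
      have hd : (d' j : ℂ) = (d i : ℂ) :=
        (mul_left_cancel₀ hij ((mul_comm _ _).trans h1)).symm
      have he : (e' j : ℂ) = (e i : ℂ) :=
        (mul_left_cancel₀ hij ((mul_comm _ _).trans h2)).symm
      exact Prod.ext (Units.ext hd) (Units.ext he)
    have hPmv : Function.Injective P.mulVec :=
      Matrix.mulVec_injective_iff_isUnit.mpr hP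
    have hQmv : Function.Injective (P⁻¹).mulVec :=
      Matrix.mulVec_injective_iff_isUnit.mpr (Matrix.isUnit_nonsing_inv_iff.mpr hP)
    apply Multiset.ext.mpr
    intro v
    rw [count_map_univ, count_map_univ]
    apply le_antisymm
    · exact fiber_card_le P hPmv _ _ hPrel v
    · exact fiber_card_le P⁻¹ hQmv _ _ hQrel v
  · intro h
    obtain ⟨σ, hσ⟩ := exists_perm_of_map_eq _ _ h
    have hd : ∀ i, (d (σ i) : ℂ) = (d' i : ℂ) := fun i =>
      congrArg (fun u : ℂˣ => (u : ℂ)) (congrArg Prod.fst (hσ i))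
    have he : ∀ i, (e (σ i) : ℂ) = (e' i : ℂ) := fun i =>
      congrArg (fun u : ℂˣ => (u : ℂ)) (congrArg Prod.snd (hσ i))
    set P : Matrix (Fin n) (Fin n) ℂ := σ.toPEquiv.toMatrix with hPdef
    have hPunit : IsUnit P := by
      rw [Matrix.isUnit_iff_isUnit_det]
      rw [show P.det = (Equiv.Perm.sign σ : ℂ) from Matrix.det_permutation σ]
      rcases Int.units_eq_one_or (Equiv.Perm.sign σ) with hs | hs <;> simp [hs]
    have hdet : IsUnit P.det := (Matrix.isUnit_iff_isUnit_det P).mp hPunit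
    have key : ∀ (a a' : Fin n → ℂ), (∀ i, a (σ i) = a' i) →
        P * Matrix.diagonal a * P⁻¹ = Matrix.diagonal a' := by
      intro a a' ha
      have h1 : P * Matrix.diagonal a = Matrix.diagonal a' * P := by
        rw [hPdef, PEquiv.toMatrix_toPEquiv_mul, PEquiv.mul_toMatrix_toPEquiv]
        ext i j
        simp only [Matrix.submatrix_apply, id_eq, Matrix.diagonal_apply]
        by_cases hij : σ i = j
        · rw [if_pos hij, if_pos (by rw [← hij]; simp)]
          rw [← ha i, hij]
        · rw [if_neg hij, if_neg (fun hc => hij (by rw [hc]; simp))]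
      calc P * Matrix.diagonal a * P⁻¹ = Matrix.diagonal a' * P * P⁻¹ := by rw [h1]
        _ = Matrix.diagonal a' * (P * P⁻¹) := by rw [mul_assoc]
        _ = Matrix.diagonal a' := by rw [Matrix.mul_nonsing_inv P hdet, mul_one]
    exact ⟨P, hPunit, key _ _ hd, key _ _ he⟩
end
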